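/- arXiv:2107.00137 — 2 statements merged into one kernel-verified Lean document; each statement's English description precedes it below -/
import Mathlib

section
/- For all i > j ≥ 0 and all coefficient sequences a, b, the ψ-derivative of the Fontané product satisfies D(a ∗_{i,j} b) = (D a) ∗_{i+1,j+1} b + a (∗_{i+1,j}∗_{1,0}) (D b), where ∗_{i+1,j}∗_{1,0} denotes the concatenated Fontané product with kernel F(n+i+1, k+j)·F(n+1, k). -/
open Finset

/-- The ψ-factorial: ψₙ! = ψ₁ψ₂⋯ψₙ, with ψ₀! = 1. -/
noncomputable def psiFact (ψ : ℕ → ℂ) : ℕ → ℂ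
  | 0 => 1
  | n + 1 => psiFact ψ n * ψ (n + 1)

/-- The ψ-binomial coefficient binomψ(n,k) = ψₙ!/(ψₖ!·ψ_{n−k}!). -/
noncomputable def psiBinom (ψ : ℕ → ℂ) (n k : ℕ) : ℂ :=
  psiFact ψ n / (psiFact ψ k * psiFact ψ (n - k))

/-- The Fontané numbers F(n,k) = (ψₙ − ψₖ)/ψ_{n−k}. -/
noncomputable def Fker (ψ : ℕ → ℂ) (n k : ℕ) : ℂ :=
  (ψ n - ψ k) / ψ (n - k)

/-- The Fontané product ∗_{i,j} of coefficient sequences. -/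
noncomputable def fontane (ψ : ℕ → ℂ) (i j : ℕ) (a b : ℕ → ℂ) (n : ℕ) : ℂ :=
  ∑ k ∈ Finset.range (n + 1), Fker ψ (n + i) (k + j) * psiBinom ψ n k * a k * b (n - k)

/-- The concatenated Fontané product ∗_{i₁,j₁}∗_{i₂,j₂}. -/
noncomputable def fontane2 (ψ : ℕ → ℂ) (i₁ j₁ i₂ j₂ : ℕ) (a b : ℕ → ℂ) (n : ℕ) : ℂ :=
  ∑ k ∈ Finset.range (n + 1),
    Fker ψ (n + i₁) (k + j₁) * Fker ψ (n + i₂) (k + j₂) * psiBinom ψ n k * a k * b (n - k)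

/-- The ψ-derivative on coefficient sequences: the shift (D a)ₙ = a_{n+1}. -/
def Dpsi (a : ℕ → ℂ) (n : ℕ) : ℂ := a (n + 1)

/-! Splitting off the `k = 0` term of `D(a ∗_{i,j} b)` and expanding `binomψ(n+1, k+1)` by the
ψ-Pascal rule `binomψ(n+1, k+1) = binomψ(n, k) + F(n+1, k+1) binomψ(n, k+1)` splits the sum into
the two products on the right. The boundary terms match because `F(n+1, 0) = 1` (as `ψ₀ = 0`)
and `F(n+1, n+1) = 0`. -/

lemma Finset.sum_range_succ_eq_add_sum_shift {M : Type*} [AddCommMonoid M] {f : ℕ → M} {n : ℕ}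
    (hf : f (n + 1) = 0) : ∑ k ∈ range (n + 1), f k = f 0 + ∑ k ∈ range (n + 1), f (k + 1) := by
  rw [← add_zero (∑ k ∈ range (n + 1), f k), ← hf, ← sum_range_succ, sum_range_succ', add_comm]

section

variable {ψ : ℕ → ℂ}

lemma psiFact_ne_zero (hψ : ∀ n : ℕ, 1 ≤ n → ψ n ≠ 0) (n : ℕ) : psiFact ψ n ≠ 0 := by
  induction n with
  | zero => exact one_ne_zero
  | succ m ih => exact mul_ne_zero ih (hψ (m + 1) (Nat.le_add_left 1 m))

lemma psiBinom_zero_right (hψ : ∀ n : ℕ, 1 ≤ n → ψ n ≠ 0) (n : ℕ) : psiBinom ψ n 0 = 1 := by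
  simp [psiBinom, psiFact, psiFact_ne_zero hψ n]

lemma psiBinom_self (hψ : ∀ n : ℕ, 1 ≤ n → ψ n ≠ 0) (n : ℕ) : psiBinom ψ n n = 1 := by
  simp [psiBinom, psiFact, psiFact_ne_zero hψ n]

lemma psiBinom_succ_succ_mul (hψ : ∀ n : ℕ, 1 ≤ n → ψ n ≠ 0) (n k : ℕ) :
    psiBinom ψ (n + 1) (k + 1) * ψ (k + 1) = ψ (n + 1) * psiBinom ψ n k := by
  have := psiFact_ne_zero hψ k
  have := psiFact_ne_zero hψ (n - k)
  have := hψ (k + 1) (Nat.le_add_left 1 k)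
  simp only [psiBinom, psiFact, Nat.add_sub_add_right]
  field_simp

lemma psiBinom_succ_right_mul (hψ : ∀ n : ℕ, 1 ≤ n → ψ n ≠ 0) {n k : ℕ} (hk : k < n) :
    psiBinom ψ n (k + 1) * ψ (k + 1) = ψ (n - k) * psiBinom ψ n k := by
  obtain ⟨d, rfl⟩ : ∃ d, n = k + 1 + d := ⟨n - (k + 1), by omega⟩
  have := psiFact_ne_zero hψ k
  have := psiFact_ne_zero hψ d
  have := hψ (k + 1) (Nat.le_add_left 1 k)
  have := hψ (d + 1) (Nat.le_add_left 1 d)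
  simp only [psiBinom, psiFact, show k + 1 + d - (k + 1) = d by omega,
    show k + 1 + d - k = d + 1 by omega]
  field_simp

lemma Fker_self (n : ℕ) : Fker ψ n n = 0 := by
  simp [Fker]

lemma Fker_succ_zero (hψ0 : ψ 0 = 0) (hψ : ∀ n : ℕ, 1 ≤ n → ψ n ≠ 0) (n : ℕ) :
    Fker ψ (n + 1) 0 = 1 := by
  simp [Fker, hψ0, hψ (n + 1) (Nat.le_add_left 1 n)]

lemma psiBinom_succ_succ (hψ : ∀ n : ℕ, 1 ≤ n → ψ n ≠ 0) {n k : ℕ} (hk : k ≤ n) :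
    psiBinom ψ (n + 1) (k + 1)
      = psiBinom ψ n k + Fker ψ (n + 1) (k + 1) * psiBinom ψ n (k + 1) := by
  rcases hk.eq_or_lt with rfl | hlt
  · simp [psiBinom_self hψ, Fker_self]
  have hk1 := hψ (k + 1) (Nat.le_add_left 1 k)
  have hnk := hψ (n - k) (by omega)
  apply mul_right_cancel₀ hk1
  rw [psiBinom_succ_succ_mul hψ, add_mul, mul_assoc, psiBinom_succ_right_mul hψ hlt, Fker,
    Nat.add_sub_add_right]
  field_simp
  ring

end

theorem Dpsi_fontane_general (ψ : ℕ → ℂ) (hψ0 : ψ 0 = 0) (hψ : ∀ n : ℕ, 1 ≤ n → ψ n ≠ 0)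
    (i j : ℕ) (a b : ℕ → ℂ) (n : ℕ) :
    Dpsi (fontane ψ i j a b) n
      = fontane ψ (i + 1) (j + 1) (Dpsi a) b n
        + fontane2 ψ (i + 1) j 1 0 a (Dpsi b) n := by
  simp only [Dpsi, fontane, fontane2, ← add_assoc, add_right_comm n 1 i, add_zero]
  set g : ℕ → ℂ := fun k ↦
    Fker ψ (n + i + 1) (k + j) * Fker ψ (n + 1) k * psiBinom ψ n k * a k * b (n - k + 1)
  have hg_last : g (n + 1) = 0 := by simp [g, Fker_self]
  have hg_zero : g 0 = Fker ψ (n + i + 1) (0 + j) * psiBinom ψ (n + 1) 0 * a 0 * b (n + 1 - 0) := by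
    simp [g, Fker_succ_zero hψ0 hψ, psiBinom_zero_right hψ]
  have hpascal : ∀ k ∈ range (n + 1),
      Fker ψ (n + i + 1) (k + 1 + j) * psiBinom ψ (n + 1) (k + 1) * a (k + 1) * b (n + 1 - (k + 1))
        = Fker ψ (n + i + 1) (k + j + 1) * psiBinom ψ n k * a (k + 1) * b (n - k)
          + g (k + 1) := by
    intro k hk
    have hkn : k ≤ n := Nat.lt_succ_iff.mp (mem_range.mp hk)
    rw [psiBinom_succ_succ hψ hkn, add_right_comm k 1 j]
    rcases hkn.eq_or_lt with rfl | hlt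
    · simp only [g, Fker_self, Nat.add_sub_add_right, zero_mul, mul_zero, add_zero]
    · simp only [g, show n - (k + 1) + 1 = n - k by omega, Nat.add_sub_add_right,
        add_right_comm k 1 j]
      ring
  rw [sum_range_succ_eq_add_sum_shift hg_last, sum_range_succ', sum_congr rfl hpascal,
    sum_add_distrib, hg_zero]
  ring

/-- The ψ-derivative of the Fontané product:
D(a ∗_{i,j} b) = (D a) ∗_{i+1,j+1} b + a (∗_{i+1,j}∗_{1,0}) (D b). -/
theorem Dpsi_fontane (ψ : ℕ → ℂ) (hψ0 : ψ 0 = 0) (hψ1 : ψ 1 = 1) (hψ : ∀ n : ℕ, 1 ≤ n → ψ n ≠ 0)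
    (i j : ℕ) (hij : j < i) (a b : ℕ → ℂ) (n : ℕ) :
    Dpsi (fontane ψ i j a b) n
      = fontane ψ (i + 1) (j + 1) (Dpsi a) b n
        + fontane2 ψ (i + 1) j 1 0 a (Dpsi b) n :=
  Dpsi_fontane_general ψ hψ0 hψ i j a b n
end

section
/- For all n ≥ 2 and all m ≥ l ≥ 0, the binomial-operator kernel at (n,2) satisfies C(n,2)(m,l) = Σ_{i=0}^{n−2} Σ_{j=0}^{n−2−i} F(m+i+j+2, l+i+j) · F(m+i+1, l+i), i.e., ⟨n 2⟩∗ = ⊞_{i=0}^{n−2} ⊞_{j=0}^{n−2−i} ∗_{i+j+2,i+j}∗_{i+1,i}. -/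
open Finset

/-- The binomial-operator kernels C(n,k)(m,l) of the binomial operators ⟨n k⟩∗. -/
noncomputable def Cker (ψ : ℕ → ℂ) : ℕ → ℕ → ℕ → ℕ → ℂ
  | _, 0, _, _ => 1
  | 0, _ + 1, _, _ => 0
  | n + 1, k + 1, m, l =>
      if k = n then ∏ i ∈ Finset.range (n + 1), Fker ψ (m + i + 1) l
      else Cker ψ n (k + 1) (m + 1) (l + 1) + Fker ψ (m + 1) l * Cker ψ n k (m + 1) l

/-! Unfolding the recursion once, `C(n+1,2)(m,l) = C(n,2)(m+1,l+1) + F(m+1,l)·C(n,1)(m+1,l)`: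
the first summand is the double sum with `i ≥ 1`, and `C(n,1)` is a single sum of Fontané
numbers, which supplies the row `i = 0`. -/

lemma Cker_zero_right (ψ : ℕ → ℂ) (n m l : ℕ) : Cker ψ n 0 m l = 1 := by
  cases n <;> rfl

lemma Cker_succ_succ_of_lt (ψ : ℕ → ℂ) {n k : ℕ} (hk : k < n) (m l : ℕ) :
    Cker ψ (n + 1) (k + 1) m l
      = Cker ψ n (k + 1) (m + 1) (l + 1) + Fker ψ (m + 1) l * Cker ψ n k (m + 1) l := by
  simp [Cker, hk.ne]

lemma Cker_succ_self (ψ : ℕ → ℂ) (n m l : ℕ) :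
    Cker ψ (n + 1) (n + 1) m l = ∏ i ∈ range (n + 1), Fker ψ (m + i + 1) l := by
  simp [Cker]

lemma Cker_succ_one (ψ : ℕ → ℂ) (n m l : ℕ) :
    Cker ψ (n + 1) 1 m l = ∑ i ∈ range (n + 1), Fker ψ (m + i + 1) (l + i) := by
  induction n generalizing m l with
  | zero => simp [Cker_succ_self]
  | succ n ih =>
    rw [Cker_succ_succ_of_lt ψ n.succ_pos, ih, sum_range_succ' _ (n + 1),
      Cker_zero_right, mul_one]
    congr 1
    refine sum_congr rfl fun i _ => ?_
    ring_nf

lemma Cker_add_two_two (ψ : ℕ → ℂ) (n m l : ℕ) :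
    Cker ψ (n + 2) 2 m l
      = ∑ i ∈ range (n + 1), ∑ j ∈ range (n + 1 - i),
          Fker ψ (m + i + j + 2) (l + i + j) * Fker ψ (m + i + 1) (l + i) := by
  induction n generalizing m l with
  | zero => simp [Cker_succ_self, prod_range_succ, mul_comm]
  | succ n ih =>
    rw [Cker_succ_succ_of_lt ψ (by omega : 1 < n + 2), ih, sum_range_succ' _ (n + 1),
      Cker_succ_one, mul_sum]
    congr 1
    · refine sum_congr rfl fun i _ => ?_
      rw [show n + 1 + 1 - (i + 1) = n + 1 - i by omega]
      refine sum_congr rfl fun j _ => ?_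
      ring_nf
    · refine sum_congr rfl fun j _ => ?_
      ring_nf

theorem Cker_n_two_general (ψ : ℕ → ℂ)
    (n : ℕ) (hn : 2 ≤ n) (m l : ℕ) :
    Cker ψ n 2 m l
      = ∑ i ∈ Finset.range (n - 1), ∑ j ∈ Finset.range (n - 1 - i),
          Fker ψ (m + i + j + 2) (l + i + j) * Fker ψ (m + i + 1) (l + i) := by
  obtain ⟨n, rfl⟩ := Nat.exists_eq_add_of_le' hn
  exact Cker_add_two_two ψ n m l

/-- ⟨n 2⟩∗ = ⊞_{i=0}^{n−2} ⊞_{j=0}^{n−2−i} ∗_{i+j+2,i+j}∗_{i+1,i}: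
C(n,2)(m,l) = Σ_{i=0}^{n−2} Σ_{j=0}^{n−2−i} F(m+i+j+2, l+i+j)·F(m+i+1, l+i). -/
theorem Cker_n_two (ψ : ℕ → ℂ) (hψ0 : ψ 0 = 0) (hψ1 : ψ 1 = 1) (hψ : ∀ n : ℕ, 1 ≤ n → ψ n ≠ 0)
    (n : ℕ) (hn : 2 ≤ n) (m l : ℕ) (hlm : l ≤ m) :
    Cker ψ n 2 m l
      = ∑ i ∈ Finset.range (n - 1), ∑ j ∈ Finset.range (n - 1 - i),
          Fker ψ (m + i + j + 2) (l + i + j) * Fker ψ (m + i + 1) (l + i) :=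
  Cker_n_two_general ψ n hn m l
end
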